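/- arXiv:math-ph/0006032 — 5 statements merged into one kernel-verified Lean document; each statement's English description precedes it below -/
import Mathlib

section
/- The matrix S is invertible and S⁻¹ · M · S = diag(c₀,…,c_n), i.e. conjugation by S diagonalizes M with diagonal entries c₀,…,c_n. -/
/-- The upper triangular matrix `S` of eigenvector columns is invertible
and conjugation by `S` diagonalizes the bidiagonal matrix `M`:
`S⁻¹ · M · S = diag(c₀,…,c_n)`. -/
theorem conjugation_diagonalizes_upper_bidiagonal {K : Type*} [Field K] (n : ℕ) (c b : ℕ → K)
    (hc : ∀ i j : ℕ, i ≤ n → j ≤ n → i ≠ j → c i ≠ c j)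
    (M : Matrix (Fin (n + 1)) (Fin (n + 1)) K)
    (hM : ∀ i j : Fin (n + 1), M i j =
      if (j : ℕ) = (i : ℕ) then c i
      else if (j : ℕ) = (i : ℕ) + 1 then b i else 0)
    (S : Matrix (Fin (n + 1)) (Fin (n + 1)) K)
    (hS : ∀ j k : Fin (n + 1), S j k =
      if (j : ℕ) ≤ (k : ℕ) then
        ∏ i ∈ Finset.Ico (j : ℕ) (k : ℕ), b i / (c (k : ℕ) - c i)
      else 0) :
    IsUnit S ∧ S⁻¹ * M * S = Matrix.diagonal (fun i : Fin (n + 1) => c (i : ℕ)) := by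
  have htri : S.BlockTriangular id := by
    intro i j hij
    rw [hS, if_neg]
    exact Nat.not_le.mpr hij
  have hdet : S.det = 1 := by
    rw [Matrix.det_of_upperTriangular htri]
    apply Finset.prod_eq_one
    intro i _
    rw [hS]
    simp
  have hU : IsUnit S := by
    rw [Matrix.isUnit_iff_isUnit_det, hdet]; exact isUnit_one
  refine ⟨hU, ?_⟩
  have key : M * S = S * Matrix.diagonal (fun i : Fin (n + 1) => c (i : ℕ)) := by
    ext j k
    rw [Matrix.mul_apply, Matrix.mul_diagonal]
    have hterm : ∀ l : Fin (n + 1), M j l * S l k =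
        (if l = j then c j * S j k else 0) +
        (if (l : ℕ) = (j : ℕ) + 1 then b j * S l k else 0) := by
      intro l
      rw [hM]
      by_cases h1 : (l : ℕ) = (j : ℕ)
      · have hlj : l = j := Fin.ext h1
        subst hlj
        simp
      · rw [if_neg h1, if_neg (fun h => h1 (Fin.val_eq_of_eq h))]
        by_cases h2 : (l : ℕ) = (j : ℕ) + 1
        · rw [if_pos h2, if_pos h2, zero_add]
        · simp [h2]
    rw [Finset.sum_congr rfl (fun l _ => hterm l), Finset.sum_add_distrib,
      Finset.sum_ite_eq' Finset.univ j (fun _ => c j * S j k)]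
    simp only [Finset.mem_univ, if_true]
    -- evaluate the second sum
    have hsecond : (∑ l : Fin (n + 1), if (l : ℕ) = (j : ℕ) + 1 then b j * S l k else 0) =
        if h : (j : ℕ) < n then b j * S ⟨(j : ℕ) + 1, by omega⟩ k else 0 := by
      split_ifs with h
      · rw [Finset.sum_eq_single (⟨(j : ℕ) + 1, by omega⟩ : Fin (n + 1))]
        · simp
        · intro l _ hl
          rw [if_neg]
          intro hval
          exact hl (Fin.ext (by simpa using hval))
        · simp
      · apply Finset.sum_eq_zero
        intro l _
        rw [if_neg]
        have := l.isLt
        omega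
    rw [hsecond]
    -- now the core identity
    rcases lt_trichotomy (j : ℕ) (k : ℕ) with hjk | hjk | hjk
    · -- j < k
      have hjn : (j : ℕ) < n := by have := k.isLt; omega
      rw [dif_pos hjn]
      have hSjk : S j k = b j / (c k - c j) *
          ∏ i ∈ Finset.Ico ((j : ℕ) + 1) (k : ℕ), b i / (c (k : ℕ) - c i) := by
        rw [hS, if_pos (le_of_lt hjk), Finset.prod_eq_prod_Ico_succ_bot hjk]
      have hSj1k : S ⟨(j : ℕ) + 1, by omega⟩ k =
          ∏ i ∈ Finset.Ico ((j : ℕ) + 1) (k : ℕ), b i / (c (k : ℕ) - c i) := by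
        rw [hS, if_pos (by simpa using hjk)]
      have hne : c (k : ℕ) - c (j : ℕ) ≠ 0 := by
        have := hc (k : ℕ) (j : ℕ) (by omega) (by omega) (by omega)
        intro h
        exact this (by linear_combination h)
      have hb : b (j : ℕ) = b (j : ℕ) / (c (k : ℕ) - c (j : ℕ)) * (c (k : ℕ) - c (j : ℕ)) :=
        (div_mul_cancel₀ _ hne).symm
      rw [hSjk, hSj1k]
      nth_rewrite 2 [hb]
      ring
    · -- j = k
      have hjkfin : j = k := Fin.ext hjk
      subst hjkfin
      split_ifs with h
      · have h0 : S ⟨(j : ℕ) + 1, by omega⟩ j = 0 := by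
          rw [hS]; apply if_neg; simp only [Fin.val_mk]; omega
        rw [h0, mul_zero, add_zero, mul_comm]
      · rw [add_zero, mul_comm]
    · -- j > k
      have hzero : S j k = 0 := by rw [hS, if_neg (by omega)]
      rw [hzero, mul_zero, zero_mul, zero_add]
      split_ifs with h
      · have h0 : S ⟨(j : ℕ) + 1, by omega⟩ k = 0 := by
          rw [hS]; apply if_neg; simp only [Fin.val_mk]; omega
        rw [h0, mul_zero]
      · rfl
  calc S⁻¹ * M * S = S⁻¹ * (M * S) := by rw [Matrix.mul_assoc]
    _ = S⁻¹ * (S * Matrix.diagonal fun i : Fin (n + 1) => c (i : ℕ)) := by rw [key]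
    _ = (S⁻¹ * S) * Matrix.diagonal (fun i : Fin (n + 1) => c (i : ℕ)) := by
        rw [Matrix.mul_assoc]
    _ = Matrix.diagonal (fun i : Fin (n + 1) => c (i : ℕ)) := by
        rw [Matrix.nonsing_inv_mul S (by rw [hdet]; exact isUnit_one), Matrix.one_mul]
end

section
/- The (n+1)×(n+1) matrix T with entries T_{jk} = ∏_{i=j+1}^{k} b_{i−1}/(c_j − c_i) for j ≤ k (the empty product being 1) and T_{jk} = 0 for j > k is the two-sided inverse of S, i.e. S · T = T · S = I. -/
/-! For `j < k`, the entry `(S * T) j k` equals `∏_{j ≤ i < k} b i` times the sum over the nodes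
`c j, …, c k` of the barycentric weights `∏_{i ≠ m} (c m - c i)⁻¹`. That sum is the coefficient of
`X ^ (k - j)` in the Lagrange expansion of the constant polynomial `1`, hence zero. The diagonal
entries are empty products, and `T * S = 1` follows from `S * T = 1` for square matrices. -/

open Finset Polynomial

namespace Lagrange

variable {F ι : Type*} [Field F] [DecidableEq ι] {s : Finset ι} {v : ι → F}

theorem coeff_basis_card_sub_one {i : ι} (hi : i ∈ s) :
    (Lagrange.basis s v i).coeff (#s - 1) = nodalWeight s v i := by
  rw [basis_eq_prod_sub_inv_mul_nodal_div hi, ← nodal_erase_eq_nodal_div hi, coeff_C_mul,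
    ← card_erase_of_mem hi, ← natDegree_nodal (s := s.erase i) (v := v),
    nodal_monic.coeff_natDegree, mul_one]

-- Compare the coefficients of `X ^ (#s - 1)` in `∑ i ∈ s, basis s v i = 1`.
theorem sum_nodalWeight_eq_zero (hvs : Set.InjOn v s) (hs : 1 < #s) :
    ∑ i ∈ s, nodalWeight s v i = 0 := by
  have h := congrArg (coeff · (#s - 1)) (sum_basis hvs (card_pos.mp (by omega)))
  simp only [finsetSum_coeff, coeff_one] at h
  rwa [sum_congr rfl fun i hi => coeff_basis_card_sub_one hi, if_neg (by omega)] at h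

end Lagrange

theorem Matrix.mul_apply_eq_sum_Icc {R : Type*} [NonUnitalNonAssocSemiring R] {n : ℕ}
    {A B : Matrix (Fin (n + 1)) (Fin (n + 1)) R} {f g : ℕ → ℕ → R}
    (hA : ∀ j k : Fin (n + 1), A j k = if (j : ℕ) ≤ k then f j k else 0)
    (hB : ∀ j k : Fin (n + 1), B j k = if (j : ℕ) ≤ k then g j k else 0) (j k : Fin (n + 1)) :
    (A * B) j k = ∑ m ∈ Icc (j : ℕ) k, f j m * g m k := by
  simp only [mul_apply, hA, hB, ite_zero_mul_ite_zero]
  rw [Fin.sum_univ_eq_sum_range (fun m => if j ≤ m ∧ m ≤ k then f j m * g m k else 0),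
    ← sum_filter]
  congr 1
  ext m
  simp only [mem_filter, mem_range, mem_Icc]
  omega

theorem Finset.prod_Icc_add_one_sub_one {M : Type*} [CommMonoid M] (f : ℕ → M) (m k : ℕ) :
    ∏ i ∈ Icc (m + 1) k, f (i - 1) = ∏ i ∈ Ico m k, f i := by
  rw [← Ico_add_one_right_eq_Icc, ← prod_Ico_add']
  simp

theorem Finset.erase_Icc_eq_Ico_union_Icc {j m k : ℕ} (hjm : j ≤ m) (hmk : m ≤ k) :
    (Icc j k).erase m = Ico j m ∪ Icc (m + 1) k := by
  ext i
  simp only [mem_erase, mem_Icc, mem_union, mem_Ico]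
  omega

section

variable {K : Type*} [Field K]

theorem prod_mul_prod_eq_mul_nodalWeight (c b : ℕ → K) {j m k : ℕ} (hjm : j ≤ m) (hmk : m ≤ k) :
    (∏ i ∈ Ico j m, b i / (c m - c i)) * ∏ i ∈ Icc (m + 1) k, b (i - 1) / (c m - c i) =
      (∏ i ∈ Ico j k, b i) * Lagrange.nodalWeight (Icc j k) c m := by
  have hdisj : Disjoint (Ico j m) (Icc (m + 1) k) := by
    simp only [disjoint_left, mem_Ico, mem_Icc]
    omega
  simp only [div_eq_mul_inv, prod_mul_distrib, Lagrange.nodalWeight,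
    erase_Icc_eq_Ico_union_Icc hjm hmk, prod_union hdisj, prod_Icc_add_one_sub_one,
    ← prod_Ico_consecutive b hjm hmk]
  ring

theorem sum_Icc_prod_mul_prod_eq_zero {c : ℕ → K} (b : ℕ → K) {j k : ℕ}
    (hc : Set.InjOn c (Icc j k)) (hjk : j < k) :
    ∑ m ∈ Icc j k, (∏ i ∈ Ico j m, b i / (c m - c i)) *
      ∏ i ∈ Icc (m + 1) k, b (i - 1) / (c m - c i) = 0 := by
  have hcard : 1 < #(Icc j k) := by simp only [Nat.card_Icc]; omega
  rw [sum_congr rfl fun m hm => prod_mul_prod_eq_mul_nodalWeight c b (mem_Icc.mp hm).1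
    (mem_Icc.mp hm).2, ← mul_sum, Lagrange.sum_nodalWeight_eq_zero hc hcard, mul_zero]

end

/-- The upper triangular matrix `T` with entries
`T_{jk} = ∏_{i=j+1}^{k} b_{i−1}/(c_j − c_i)` for `j ≤ k` (and `0` otherwise)
is the two-sided inverse of `S`: `S · T = T · S = 1`. -/
theorem inverse_of_eigenvector_matrix {K : Type*} [Field K] (n : ℕ) (c b : ℕ → K)
    (hc : ∀ i j : ℕ, i ≤ n → j ≤ n → i ≠ j → c i ≠ c j)
    (S : Matrix (Fin (n + 1)) (Fin (n + 1)) K)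
    (hS : ∀ j k : Fin (n + 1), S j k =
      if (j : ℕ) ≤ (k : ℕ) then
        ∏ i ∈ Finset.Ico (j : ℕ) (k : ℕ), b i / (c (k : ℕ) - c i)
      else 0)
    (T : Matrix (Fin (n + 1)) (Fin (n + 1)) K)
    (hT : ∀ j k : Fin (n + 1), T j k =
      if (j : ℕ) ≤ (k : ℕ) then
        ∏ i ∈ Finset.Icc ((j : ℕ) + 1) (k : ℕ), b (i - 1) / (c (j : ℕ) - c i)
      else 0) :
    S * T = 1 ∧ T * S = 1 := by
  have hST : S * T = 1 := by
    ext j k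
    rw [Matrix.mul_apply_eq_sum_Icc (f := fun j k => ∏ i ∈ Ico j k, b i / (c k - c i))
      (g := fun j k => ∏ i ∈ Icc (j + 1) k, b (i - 1) / (c j - c i)) hS hT, Matrix.one_apply]
    rcases lt_trichotomy j k with hjk | rfl | hkj
    · have hinj : Set.InjOn c (Icc (j : ℕ) k) := fun x hx y hy hxy => by
        simp only [coe_Icc, Set.mem_Icc] at hx hy
        by_contra hne
        exact hc x y (by omega) (by omega) hne hxy
      rw [if_neg hjk.ne, sum_Icc_prod_mul_prod_eq_zero b hinj hjk]
    · simp
    · rw [if_neg hkj.ne', Icc_eq_empty (by omega), sum_empty]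
  exact ⟨hST, mul_eq_one_comm.mp hST⟩
end

section
/- Fix ℓ, k ∈ ℕ and assume g(k−ℓ−j) ≠ 0 for all integers j with 1 ≤ j ≤ k. Then the vector v_{ℓ,k} := Σ_{n=0}^k M^{k,ℓ}_n |ℓ+n, k−n⟩ is an eigenvector of ΔD with eigenvalue d^(1)_ℓ · d^(2)_k, i.e. ΔD v_{ℓ,k} = d^(1)_ℓ d^(2)_k v_{ℓ,k}; in particular the eigenvector does not depend on u. -/
set_option maxHeartbeats 1000000


/-- The basis vector `|ℓ,k⟩` of the space of finitely supported functions `ℕ × ℕ → ℂ`. -/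
noncomputable def ket (p : ℕ × ℕ) : (ℕ × ℕ) →₀ ℂ := Finsupp.single p 1

/-- The coefficient `M^{k,ℓ}_n = ((−η)^n/n!) ∏_{j=1}^n f^(1)_{ℓ+j−1} e_{k−j+1} / g(k−ℓ−j)`,
where `e_m = m`, `f^(1)_m = 2λ₁ − m` and `g(x) = δ₁ − δ₂ + η(λ₁ − λ₂ + x)`. -/
noncomputable def Mcoef (lam1 lam2 del1 del2 eta : ℂ) (k l n : ℕ) : ℂ :=
  ((-eta) ^ n / (n.factorial : ℂ)) *
    ∏ j ∈ Finset.Icc 1 n,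
      (2 * lam1 - ((l : ℂ) + (j : ℂ) - 1)) * ((k : ℂ) - (j : ℂ) + 1) /
        (del1 - del2 + eta * (lam1 - lam2 + ((k : ℂ) - (l : ℂ) - (j : ℂ))))

/-- The vector `v_{ℓ,k} = Σ_{n=0}^k M^{k,ℓ}_n |ℓ+n, k−n⟩`. -/
noncomputable def vD (lam1 lam2 del1 del2 eta : ℂ) (l k : ℕ) : (ℕ × ℕ) →₀ ℂ :=
  ∑ n ∈ Finset.range (k + 1), Mcoef lam1 lam2 del1 del2 eta k l n • ket (l + n, k - n)

/-- `v_{ℓ,k}` is an eigenvector of `ΔD` with eigenvalue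
`d^(1)_ℓ · d^(2)_k`, i.e. `ΔD v_{ℓ,k} = d^(1)_ℓ d^(2)_k v_{ℓ,k}`;
in particular the eigenvector does not depend on `u`. -/
theorem deltaD_eigenvector (lam1 lam2 del1 del2 eta u : ℂ) (heta : eta ≠ 0) (l k : ℕ)
    (hg : ∀ j : ℕ, 1 ≤ j → j ≤ k →
      del1 - del2 + eta * (lam1 - lam2 + ((k : ℂ) - (l : ℂ) - (j : ℂ))) ≠ 0)
    (ΔD : ((ℕ × ℕ) →₀ ℂ) →ₗ[ℂ] ((ℕ × ℕ) →₀ ℂ))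
    (hΔD : ∀ p r : ℕ, ΔD (ket (p, r)) =
      (eta ^ 2 * (2 * lam1 - (p : ℂ)) * (r : ℂ)) • ket (p + 1, r - 1) +
        ((u - del1 - eta * (lam1 - (p : ℂ))) * (u - del2 - eta * (lam2 - (r : ℂ)))) •
          ket (p, r)) :
    ΔD (vD lam1 lam2 del1 del2 eta l k) =
      ((u - del1 - eta * (lam1 - (l : ℂ))) * (u - del2 - eta * (lam2 - (k : ℂ)))) •
        vD lam1 lam2 del1 del2 eta l k := by
  classical
  set C : ℕ → ℂ := fun n => Mcoef lam1 lam2 del1 del2 eta k l n with hC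
  -- recursion for Mcoef
  have hrec : ∀ m : ℕ, m < k →
      C (m+1) * ((m:ℂ)+1) *
        (del1 - del2 + eta * (lam1 - lam2 + ((k:ℂ) - (l:ℂ) - ((m:ℂ)+1)))) =
      C m * (-eta) * ((2*lam1 - ((l:ℂ)+(m:ℂ))) * ((k:ℂ)-(m:ℂ))) := by
    intro m hm
    have hg' := hg (m+1) (by omega) (by omega)
    push_cast at hg'
    have hfac : ((m.factorial : ℂ)) ≠ 0 := by exact_mod_cast m.factorial_ne_zero
    have hprod : (∏ x ∈ Finset.Icc 1 m,
        (del1 - del2 + eta * (lam1 - lam2 + ((k:ℂ) - (l:ℂ) - (x:ℂ))))) ≠ 0 := by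
      refine Finset.prod_ne_zero_iff.mpr (fun x hx => ?_)
      rcases Finset.mem_Icc.mp hx with ⟨h1, h2⟩
      exact hg x h1 (by omega)
    simp only [hC, Mcoef]
    rw [Finset.prod_Icc_succ_top (by omega : 1 ≤ m+1)]
    have hm1 : ((m:ℂ)+1) ≠ 0 := by exact_mod_cast Nat.succ_ne_zero m
    push_cast [Nat.factorial_succ]
    field_simp
    ring
  rw [vD, map_sum]
  simp only [map_smul, hΔD, smul_add, smul_smul]
  rw [Finset.sum_add_distrib, Finset.smul_sum]
  simp only [smul_smul]
  -- the shift sum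
  set A : ℕ → ℂ := fun n => if n = 0 then 0 else
    C (n-1) * (eta^2 * (2*lam1 - ((l + (n-1) : ℕ) : ℂ)) * (((k - (n-1) : ℕ)) : ℂ)) with hA
  have hshift :
      (∑ n ∈ Finset.range (k+1),
        (C n * (eta^2 * (2*lam1 - ((l+n : ℕ):ℂ)) * (((k-n : ℕ)):ℂ))) •
          ket (l+n+1, (k-n)-1)) =
      ∑ n ∈ Finset.range (k+1), A n • ket (l+n, k-n) := by
    rw [Finset.sum_range_succ, Finset.sum_range_succ']
    have e1 : (C k * (eta^2 * (2*lam1 - ((l+k : ℕ):ℂ)) * (((k-k : ℕ)):ℂ))) = 0 := by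
      simp
    have e2 : A 0 = 0 := by simp [hA]
    rw [e1, e2, zero_smul, zero_smul, add_zero, add_zero]
    apply Finset.sum_congr rfl
    intro n hn
    have ea : A (n+1) = C n * (eta^2 * (2*lam1 - ((l+n : ℕ):ℂ)) * (((k-n : ℕ)):ℂ)) := by
      simp [hA]
    have eb : k - n - 1 = k - (n+1) := by omega
    have ec : l + n + 1 = l + (n+1) := by omega
    rw [ea, eb, ec]
  calc (∑ n ∈ Finset.range (k+1),
        (C n * (eta^2 * (2*lam1 - ((l+n : ℕ):ℂ)) * (((k-n : ℕ)):ℂ))) •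
          ket (l+n+1, (k-n)-1)) +
      ∑ n ∈ Finset.range (k+1),
        (C n * ((u - del1 - eta*(lam1 - ((l+n : ℕ):ℂ))) *
          (u - del2 - eta*(lam2 - (((k-n : ℕ)):ℂ))))) • ket (l+n, k-n)
      = ∑ n ∈ Finset.range (k+1),
          (A n + C n * ((u - del1 - eta*(lam1 - ((l+n : ℕ):ℂ))) *
            (u - del2 - eta*(lam2 - (((k-n : ℕ)):ℂ))))) • ket (l+n, k-n) := by
        rw [hshift, ← Finset.sum_add_distrib]
        simp only [add_smul]
    _ = _ := by
        apply Finset.sum_congr rfl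
        intro n hn
        simp only [Finset.mem_range] at hn
        congr 1
        match n with
        | 0 =>
          simp only [hA, if_pos rfl, zero_add, Nat.add_zero, Nat.sub_zero, hC]
          ring
        | Nat.succ m =>
          have hm : m < k := by omega
          have hkey := hrec m hm
          simp only [hA, if_neg (Nat.succ_ne_zero m), Nat.succ_sub_one]
          have h1 : ((l + (m+1) : ℕ) : ℂ) = (l:ℂ) + (m:ℂ) + 1 := by push_cast; ring
          have h2 : ((k - (m+1) : ℕ) : ℂ) = (k:ℂ) - (m:ℂ) - 1 := by
            have : (m+1:ℕ) ≤ k := by omega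
            push_cast [Nat.cast_sub this]; ring
          have h3 : ((l + m : ℕ) : ℂ) = (l:ℂ) + (m:ℂ) := by push_cast; ring
          have h4 : ((k - m : ℕ) : ℂ) = (k:ℂ) - (m:ℂ) := by
            push_cast [Nat.cast_sub hm.le]; ring
          rw [h1, h2, h3, h4]
          linear_combination eta * hkey
end

section
/- Assume g(m) ≠ 0 for every integer m. Then for all ℓ, k ∈ ℕ one has |ℓ,k⟩ = Σ_{n=0}^k (η^n / n!) · ∏_{j=1}^n [f^(1)_{ℓ+j−1} e_{k−j+1} / g((k−n)−(ℓ+n)+j)] · v_{ℓ+n, k−n}, where v_{ℓ,k} := Σ_{n=0}^k M^{k,ℓ}_n |ℓ+n, k−n⟩. In other words, this formula inverts the change of basis |ℓ,k⟩ ↦ v_{ℓ,k}. -/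
/-!
Substituting the definition of `v` and collecting the coefficient of `|ℓ+s, k−s⟩`, the claim
reduces to the vanishing, for `1 ≤ s ≤ k`, of `Σ_{n ≤ s} c_n M^{k−n,ℓ+n}_{s−n}`, where `c_n` is the
coefficient in the theorem. All denominators involved are values `W i = g(k − ℓ − i)` of an affine
function of `i`, and up to a factor independent of `n` the sum is
`Σ_n (−1)^n C(s,n) W(2n) / ∏_{i=0}^{s} W(n+i)`. Since `s W(2n) = (s−n) W(n) + n W(n+s)` and
`(s−n) C(s,n) = (n+1) C(s,n+1)`, the terms of `s` times this sum telescope to zero.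
-/

open Finset

section AffineSequence

variable {K : Type*} [Field K] {W : ℕ → K} {d : K}

theorem apply_add_eq_of_succ_eq_add (hW : ∀ i, W (i + 1) = W i + d) (n m : ℕ) :
    W (n + m) = W n + m * d := by
  induction m with
  | zero => simp
  | succ m ih => rw [← add_assoc, hW, ih]; push_cast; ring

theorem sum_alternating_choose_mul_div_prod_eq_zero [CharZero K] (hW : ∀ i, W (i + 1) = W i + d)
    (hW0 : ∀ i, W i ≠ 0) {s : ℕ} (hs : s ≠ 0) :
    ∑ n ∈ range (s + 1),
      (-1) ^ n * (s.choose n : K) * W (2 * n) / ∏ i ∈ range (s + 1), W (n + i) = 0 := by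
  set T : ℕ → K := fun n => ∏ i ∈ range s, W (n + i)
  have hT : ∀ n, T n ≠ 0 := fun n => prod_ne_zero_iff.mpr fun i _ => hW0 _
  set F : ℕ → K := fun n => (-1) ^ n * (n * s.choose n) / T n
  have hterm : ∀ n ∈ range (s + 1),
      s * ((-1) ^ n * (s.choose n : K) * W (2 * n) / ∏ i ∈ range (s + 1), W (n + i))
        = F n - F (n + 1) := by
    intro n hn
    have hns : n ≤ s := Nat.lt_succ_iff.mp (mem_range.mp hn)
    have hlast : ∏ i ∈ range (s + 1), W (n + i) = T n * W (n + s) := prod_range_succ _ _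
    have hfirst : ∏ i ∈ range (s + 1), W (n + i) = W n * T (n + 1) := by
      rw [prod_range_succ', mul_comm]
      simp only [T, add_zero, add_right_comm n, add_assoc]
    have hchoose : (s.choose (n + 1) : K) * (n + 1) = s.choose n * (s - n) := by
      have h := congrArg (Nat.cast (R := K)) (Nat.choose_succ_right_eq s n)
      push_cast [Nat.cast_sub hns] at h
      exact h
    have h2n : W (2 * n) = W n + n * d := by rw [two_mul, apply_add_eq_of_succ_eq_add hW]
    have hns' : W (n + s) = W n + s * d := apply_add_eq_of_succ_eq_add hW n s
    have hP : T n * W (n + s) = W n * T (n + 1) := hlast.symm.trans hfirst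
    simp only [F]
    rw [hlast, div_sub_div _ _ (hT n) (hT (n + 1)), mul_div_assoc',
      div_eq_div_iff (mul_ne_zero (hT n) (hW0 _)) (mul_ne_zero (hT n) (hT (n + 1)))]
    push_cast
    linear_combination (-1) ^ n * T n * (-(T n * W (n + s)) * hchoose
      - s.choose n * (s - n) * hP + s.choose n * T (n + 1) * (s * h2n - n * hns'))
  refine (mul_eq_zero.mp ?_).resolve_left (Nat.cast_ne_zero.mpr hs)
  rw [mul_sum, sum_congr rfl hterm, sum_range_sub']
  simp [F]

end AffineSequence

theorem prod_Icc_one_eq_prod_range {M : Type*} [CommMonoid M] (f : ℕ → M) (n : ℕ) :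
    ∏ j ∈ Icc 1 n, f j = ∏ i ∈ range n, f (i + 1) := by
  rw [← Finset.Ico_add_one_right_eq_Icc, prod_Ico_eq_prod_range, Nat.add_sub_cancel]
  simp only [add_comm]

section ChangeOfBasis

variable (lam1 lam2 del1 del2 eta : ℂ) (l k : ℕ)

/-- `gDiag ℓ k i = g(k − ℓ − i)`. -/
noncomputable def gDiag (i : ℕ) : ℂ := del1 - del2 + eta * (lam1 - lam2 + ((k : ℂ) - l - i))

/-- `numerCoef ℓ k j = f^(1)_{ℓ+j−1} e_{k−j+1}`. -/
noncomputable def numerCoef (j : ℕ) : ℂ := (2 * lam1 - ((l : ℂ) + j - 1)) * ((k : ℂ) - j + 1)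

noncomputable def invCoef (n : ℕ) : ℂ :=
  (eta ^ n / (n.factorial : ℂ)) *
    ∏ j ∈ Finset.Icc 1 n,
      (2 * lam1 - ((l : ℂ) + (j : ℂ) - 1)) * ((k : ℂ) - (j : ℂ) + 1) /
        (del1 - del2 + eta * (lam1 - lam2 +
          (((k : ℂ) - (n : ℂ)) - ((l : ℂ) + (n : ℂ)) + (j : ℂ))))

theorem gDiag_succ (i : ℕ) :
    gDiag lam1 lam2 del1 del2 eta l k (i + 1) = gDiag lam1 lam2 del1 del2 eta l k i + -eta := by
  simp only [gDiag]; push_cast; ring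

theorem invCoef_eq (n : ℕ) :
    invCoef lam1 lam2 del1 del2 eta l k n = eta ^ n / n.factorial *
      ((∏ i ∈ range n, numerCoef lam1 l k (i + 1)) /
        ∏ i ∈ range n, gDiag lam1 lam2 del1 del2 eta l k (n + i)) := by
  rw [invCoef, prod_Icc_one_eq_prod_range, prod_div_distrib,
    ← prod_range_reflect (fun i => gDiag lam1 lam2 del1 del2 eta l k (n + i)) n]
  congr 2
  refine prod_congr rfl fun i hi => ?_
  have hin : i < n := mem_range.mp hi
  rw [gDiag, show n + (n - 1 - i) = 2 * n - (i + 1) by omega, Nat.cast_sub (by omega)]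
  push_cast
  ring

theorem Mcoef_sub_add_eq {n : ℕ} (hn : n ≤ k) (m : ℕ) :
    Mcoef lam1 lam2 del1 del2 eta (k - n) (l + n) m = (-eta) ^ m / m.factorial *
      ((∏ i ∈ range m, numerCoef lam1 l k (n + i + 1)) /
        ∏ i ∈ range m, gDiag lam1 lam2 del1 del2 eta l k (2 * n + 1 + i)) := by
  rw [Mcoef, prod_Icc_one_eq_prod_range, prod_div_distrib]
  congr 2 <;> refine prod_congr rfl fun i _ => ?_
  · rw [numerCoef]; push_cast [Nat.cast_sub hn]; ring
  · rw [gDiag]; push_cast [Nat.cast_sub hn]; ring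

theorem sum_smul_vD (c : ℕ → ℂ) :
    ∑ n ∈ range (k + 1), c n • vD lam1 lam2 del1 del2 eta (l + n) (k - n)
      = ∑ s ∈ range (k + 1),
          (∑ n ∈ range (s + 1), c n * Mcoef lam1 lam2 del1 del2 eta (k - n) (l + n) (s - n)) •
            ket (l + s, k - s) := by
  let f n m :=
    (c n * Mcoef lam1 lam2 del1 del2 eta (k - n) (l + n) m) • ket (l + n + m, k - (n + m))
  calc ∑ n ∈ range (k + 1), c n • vD lam1 lam2 del1 del2 eta (l + n) (k - n)
      = ∑ n ∈ range (k + 1), ∑ m ∈ range (k + 1 - n), f n m := by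
        refine sum_congr rfl fun n hn => ?_
        rw [vD, smul_sum, show k + 1 - n = k - n + 1 by have := mem_range.mp hn; omega]
        refine sum_congr rfl fun m _ => ?_
        rw [smul_smul, Nat.sub_sub]
    _ = ∑ s ∈ range (k + 1), ∑ n ∈ range (s + 1), f n (s - n) := (sum_range_diag_flip _ f).symm
    _ = _ := by
        refine sum_congr rfl fun s _ => ?_
        rw [sum_smul]
        refine sum_congr rfl fun n hn => ?_
        have hns := mem_range.mp hn
        simp only [f]
        congr 3 <;> omega

variable {lam1 lam2 del1 del2 eta}

theorem gDiag_ne_zero (hg : ∀ m : ℤ, del1 - del2 + eta * (lam1 - lam2 + (m : ℂ)) ≠ 0) (i : ℕ) :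
    gDiag lam1 lam2 del1 del2 eta l k i ≠ 0 := by
  simpa [gDiag] using hg (k - l - i)

theorem invCoef_mul_Mcoef (hg : ∀ m : ℤ, del1 - del2 + eta * (lam1 - lam2 + (m : ℂ)) ≠ 0)
    {n s : ℕ} (hns : n ≤ s) (hsk : s ≤ k) :
    invCoef lam1 lam2 del1 del2 eta l k n * Mcoef lam1 lam2 del1 del2 eta (k - n) (l + n) (s - n)
      = (-eta) ^ s / s.factorial * (∏ i ∈ range s, numerCoef lam1 l k (i + 1)) *
        ((-1) ^ n * s.choose n * gDiag lam1 lam2 del1 del2 eta l k (2 * n) /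
          ∏ i ∈ range (s + 1), gDiag lam1 lam2 del1 del2 eta l k (n + i)) := by
  obtain ⟨m, rfl⟩ := Nat.exists_eq_add_of_le hns
  rw [Nat.add_sub_cancel_left, invCoef_eq, Mcoef_sub_add_eq _ _ _ _ _ _ _ (by omega),
    prod_range_add (fun i => numerCoef lam1 l k (i + 1))]
  set W := gDiag lam1 lam2 del1 del2 eta l k
  have hW : ∀ i, W i ≠ 0 := gDiag_ne_zero l k hg
  have hden : ∏ i ∈ range (n + m + 1), W (n + i)
      = (∏ i ∈ range n, W (n + i)) * (W (2 * n) * ∏ i ∈ range m, W (2 * n + 1 + i)) := by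
    rw [add_assoc, prod_range_add, prod_range_succ']
    simp only [add_zero, two_mul, mul_comm (W (n + n))]
    congr 2
    refine prod_congr rfl fun i _ => ?_
    congr 1
    omega
  have hfact : ((n + m).choose n : ℂ) * n.factorial * m.factorial = (n + m).factorial := by
    have h := Nat.choose_mul_factorial_mul_factorial (Nat.le_add_right n m)
    rw [Nat.add_sub_cancel_left] at h
    exact_mod_cast h
  have hsign : (-eta) ^ (n + m) * (-1) ^ n = eta ^ n * (-eta) ^ m := by
    rw [pow_add, mul_right_comm, ← mul_pow, neg_mul_neg, mul_one]
  rw [hden, ← hfact]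
  have hP : ∏ i ∈ range n, W (n + i) ≠ 0 := prod_ne_zero_iff.mpr fun i _ => hW _
  have hQ : ∏ i ∈ range m, W (2 * n + 1 + i) ≠ 0 := prod_ne_zero_iff.mpr fun i _ => hW _
  have hw : W (2 * n) ≠ 0 := hW _
  have hC : ((n + m).choose n : ℂ) ≠ 0 :=
    Nat.cast_ne_zero.mpr (Nat.choose_pos (Nat.le_add_right n m)).ne'
  have hnf : (n.factorial : ℂ) ≠ 0 := Nat.cast_ne_zero.mpr n.factorial_ne_zero
  have hmf : (m.factorial : ℂ) ≠ 0 := Nat.cast_ne_zero.mpr m.factorial_ne_zero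
  field_simp
  rw [mul_assoc _ ((-eta) ^ (n + m)), hsign]
  ring

theorem sum_invCoef_mul_Mcoef_eq_zero
    (hg : ∀ m : ℤ, del1 - del2 + eta * (lam1 - lam2 + (m : ℂ)) ≠ 0) {s : ℕ} (hs : s ≠ 0)
    (hsk : s ≤ k) :
    ∑ n ∈ range (s + 1),
      invCoef lam1 lam2 del1 del2 eta l k n * Mcoef lam1 lam2 del1 del2 eta (k - n) (l + n) (s - n)
      = 0 := by
  rw [sum_congr rfl fun n hn =>
      invCoef_mul_Mcoef l k hg (Nat.lt_succ_iff.mp (mem_range.mp hn)) hsk,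
    ← mul_sum, sum_alternating_choose_mul_div_prod_eq_zero (gDiag_succ _ _ _ _ _ l k)
      (gDiag_ne_zero l k hg) hs, mul_zero]

end ChangeOfBasis

theorem ket_eq_sum_vD_general (lam1 lam2 del1 del2 eta : ℂ)
    (hg : ∀ m : ℤ, del1 - del2 + eta * (lam1 - lam2 + (m : ℂ)) ≠ 0) (l k : ℕ) :
    ket (l, k) =
      ∑ n ∈ Finset.range (k + 1),
        ((eta ^ n / (n.factorial : ℂ)) *
            ∏ j ∈ Finset.Icc 1 n,
              (2 * lam1 - ((l : ℂ) + (j : ℂ) - 1)) * ((k : ℂ) - (j : ℂ) + 1) /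
                (del1 - del2 + eta * (lam1 - lam2 +
                  (((k : ℂ) - (n : ℂ)) - ((l : ℂ) + (n : ℂ)) + (j : ℂ))))) •
          vD lam1 lam2 del1 del2 eta (l + n) (k - n) := by
  change _ = ∑ n ∈ range (k + 1), invCoef lam1 lam2 del1 del2 eta l k n • _
  rw [sum_smul_vD, sum_eq_single_of_mem 0 (mem_range.mpr k.succ_pos)]
  · simp [invCoef, Mcoef, ket]
  · intro s hs hs0
    rw [sum_invCoef_mul_Mcoef_eq_zero l k hg hs0 (Nat.lt_succ_iff.mp (mem_range.mp hs)), zero_smul]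

/-- inverse change of basis:
`|ℓ,k⟩ = Σ_{n=0}^k (η^n/n!) ∏_{j=1}^n [f^(1)_{ℓ+j−1} e_{k−j+1} / g((k−n)−(ℓ+n)+j)] v_{ℓ+n,k−n}`. -/
theorem ket_eq_sum_vD (lam1 lam2 del1 del2 eta : ℂ) (heta : eta ≠ 0)
    (hg : ∀ m : ℤ, del1 - del2 + eta * (lam1 - lam2 + (m : ℂ)) ≠ 0) (l k : ℕ) :
    ket (l, k) =
      ∑ n ∈ Finset.range (k + 1),
        ((eta ^ n / (n.factorial : ℂ)) *
            ∏ j ∈ Finset.Icc 1 n,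
              (2 * lam1 - ((l : ℂ) + (j : ℂ) - 1)) * ((k : ℂ) - (j : ℂ) + 1) /
                (del1 - del2 + eta * (lam1 - lam2 +
                  (((k : ℂ) - (n : ℂ)) - ((l : ℂ) + (n : ℂ)) + (j : ℂ))))) •
          vD lam1 lam2 del1 del2 eta (l + n) (k - n) :=
  ket_eq_sum_vD_general lam1 lam2 del1 del2 eta hg l k
end

section
/- Let z := (δ₁−δ₂)/η and fix ℓ, k ∈ ℕ. Assume that none of z+λ₁−λ₂−ℓ, z−λ₁−λ₂, z+λ₁−λ₂+k−ℓ+1, z+λ₁+λ₂−ℓ+1 is a nonpositive integer. Then the coefficient of the normalized diagonal part R₀/χ of the universal R-matrix of the Yangian Y(sl₂) on the weight vector |ℓ,k⟩, namely [Γ(z+λ₁−λ₂+k+1)/Γ(z+λ₁−λ₂−ℓ+k+1)] · [Γ(z+λ₁+λ₂−ℓ+1)/Γ(z+λ₁+λ₂+1)] · [Γ(z+λ₁−λ₂−ℓ)/Γ(z+λ₁−λ₂−ℓ+k)] · [Γ(z−λ₁−λ₂+k)/Γ(z−λ₁−λ₂)], factorizes as the product q^op_{ℓ,k} / q_{ℓ,k},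 where q_{ℓ,k} := ∏_{j=0}^{k−1} [(z+λ₁−λ₂−ℓ+j)/(z−λ₁−λ₂+j)] and q^op_{ℓ,k} := ∏_{j=0}^{ℓ−1} [(z+λ₁−λ₂+k−ℓ+1+j)/(z+λ₁+λ₂−ℓ+1+j)] (here q^op_{ℓ,k} is the coefficient of Q₂₁⁻¹, obtained from q by exchanging ℓ ↔ k, λ₁ ↔ λ₂ and δ₁ ↔ δ₂, and 1/q_{ℓ,k} is the coefficient of Q₁₂). In particular R₀/χ = Q₂₁⁻¹ · Q₁₂ coefficientwise. -/
lemma Gamma_add_nat_eq (s : ℂ) (n : ℕ) (hs : ∀ m : ℕ, s ≠ -(m : ℂ)) :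
    Complex.Gamma (s + n) = (∏ j ∈ Finset.range n, (s + (j : ℂ))) * Complex.Gamma s := by
  induction n with
  | zero => simp
  | succ n ih =>
    have hne : s + (n : ℂ) ≠ 0 := by
      intro h
      exact hs n (by linear_combination h)
    have : s + ((n + 1 : ℕ) : ℂ) = (s + n) + 1 := by push_cast; ring
    rw [this, Complex.Gamma_add_one _ hne, ih, Finset.prod_range_succ]
    ring

/-- with `z = (δ₁−δ₂)/η`, the coefficient of the normalized diagonal part
`R₀/χ` of the universal R-matrix on the weight vector `|ℓ,k⟩` factorizes as
`q^op_{ℓ,k} / q_{ℓ,k}`, where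
`q_{ℓ,k} = ∏_{j=0}^{k−1} (z+λ₁−λ₂−ℓ+j)/(z−λ₁−λ₂+j)` and
`q^op_{ℓ,k} = ∏_{j=0}^{ℓ−1} (z+λ₁−λ₂+k−ℓ+1+j)/(z+λ₁+λ₂−ℓ+1+j)`. -/
theorem R0_factorizes_as_Q21inv_Q12 (lam1 lam2 del1 del2 eta z : ℂ) (heta : eta ≠ 0)
    (hz : z = (del1 - del2) / eta) (l k : ℕ)
    (h1 : ∀ m : ℕ, z + lam1 - lam2 - (l : ℂ) ≠ -(m : ℂ))
    (h2 : ∀ m : ℕ, z - lam1 - lam2 ≠ -(m : ℂ))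
    (h3 : ∀ m : ℕ, z + lam1 - lam2 + (k : ℂ) - (l : ℂ) + 1 ≠ -(m : ℂ))
    (h4 : ∀ m : ℕ, z + lam1 + lam2 - (l : ℂ) + 1 ≠ -(m : ℂ)) :
    Complex.Gamma (z + lam1 - lam2 + (k : ℂ) + 1) /
          Complex.Gamma (z + lam1 - lam2 - (l : ℂ) + (k : ℂ) + 1) *
        (Complex.Gamma (z + lam1 + lam2 - (l : ℂ) + 1) /
          Complex.Gamma (z + lam1 + lam2 + 1)) *
        (Complex.Gamma (z + lam1 - lam2 - (l : ℂ)) /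
          Complex.Gamma (z + lam1 - lam2 - (l : ℂ) + (k : ℂ))) *
        (Complex.Gamma (z - lam1 - lam2 + (k : ℂ)) /
          Complex.Gamma (z - lam1 - lam2)) =
      (∏ j ∈ Finset.range l,
          (z + lam1 - lam2 + (k : ℂ) - (l : ℂ) + 1 + (j : ℂ)) /
            (z + lam1 + lam2 - (l : ℂ) + 1 + (j : ℂ))) /
        (∏ j ∈ Finset.range k,
          (z + lam1 - lam2 - (l : ℂ) + (j : ℂ)) /
            (z - lam1 - lam2 + (j : ℂ))) := by
  set x := z + lam1 - lam2 - (l : ℂ) with hx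
  set y := z - lam1 - lam2 with hy
  set u := z + lam1 - lam2 + (k : ℂ) - (l : ℂ) + 1 with hu
  set v := z + lam1 + lam2 - (l : ℂ) + 1 with hv
  have hΓx : Complex.Gamma x ≠ 0 := Complex.Gamma_ne_zero h1
  have hΓy : Complex.Gamma y ≠ 0 := Complex.Gamma_ne_zero h2
  have hΓu : Complex.Gamma u ≠ 0 := Complex.Gamma_ne_zero h3
  have hΓv : Complex.Gamma v ≠ 0 := Complex.Gamma_ne_zero h4
  have hPx : ∀ j : ℕ, x + (j : ℂ) ≠ 0 := fun j h => h1 j (by linear_combination h)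
  have hPy : ∀ j : ℕ, y + (j : ℂ) ≠ 0 := fun j h => h2 j (by linear_combination h)
  have hPv : ∀ j : ℕ, v + (j : ℂ) ≠ 0 := fun j h => h4 j (by linear_combination h)
  have e1 : Complex.Gamma (z + lam1 - lam2 + (k : ℂ) + 1)
      = (∏ j ∈ Finset.range l, (u + (j : ℂ))) * Complex.Gamma u := by
    rw [show z + lam1 - lam2 + (k : ℂ) + 1 = u + (l : ℂ) by simp only [hu, hx] <;> ring]
    exact Gamma_add_nat_eq u l h3
  have e2 : Complex.Gamma (z + lam1 - lam2 - (l : ℂ) + (k : ℂ) + 1) = Complex.Gamma u := by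
    rw [show x + (k : ℂ) + 1 = u by simp only [hu, hx] <;> ring]
  have e3 : Complex.Gamma (z + lam1 + lam2 + 1)
      = (∏ j ∈ Finset.range l, (v + (j : ℂ))) * Complex.Gamma v := by
    rw [show z + lam1 + lam2 + 1 = v + (l : ℂ) by simp only [hv, hx] <;> ring]
    exact Gamma_add_nat_eq v l h4
  have e4 : Complex.Gamma (z + lam1 - lam2 - (l : ℂ) + (k : ℂ))
      = (∏ j ∈ Finset.range k, (x + (j : ℂ))) * Complex.Gamma x := by
    rw [show z + lam1 - lam2 - (l : ℂ) + (k : ℂ) = x + (k : ℂ) by simp only [hx] <;> ring]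
    exact Gamma_add_nat_eq x k h1
  have e5 : Complex.Gamma (z - lam1 - lam2 + (k : ℂ))
      = (∏ j ∈ Finset.range k, (y + (j : ℂ))) * Complex.Gamma y :=
    Gamma_add_nat_eq y k h2
  rw [e1, e2, e3, e4, e5]
  have hQx : (∏ j ∈ Finset.range k, (x + (j : ℂ))) ≠ 0 :=
    Finset.prod_ne_zero_iff.mpr fun j _ => hPx j
  have hQy : (∏ j ∈ Finset.range k, (y + (j : ℂ))) ≠ 0 :=
    Finset.prod_ne_zero_iff.mpr fun j _ => hPy j
  have hQv : (∏ j ∈ Finset.range l, (v + (j : ℂ))) ≠ 0 :=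
    Finset.prod_ne_zero_iff.mpr fun j _ => hPv j
  rw [Finset.prod_div_distrib, Finset.prod_div_distrib]
  field_simp
end
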